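/- arXiv:0801.1225 — 2 statements merged into one kernel-verified Lean document; each statement's English description precedes it below -/
import Mathlib

section
/- Let k be a field, let A be a finite-dimensional simple k-algebra, and let M be an A-bimodule (with both induced k-actions agreeing) that is finitely generated as a bimodule, hence finite-dimensional as a k-vector space. For every a ∈ A, let λ_a : M → M denote left multiplication by a and ρ_a : M → M denote right multiplication by a, both k-linear endomorphisms of M. Then det_k(λ_a) = det_k(ρ_a). -/
/-!
Over a simple artinian ring all simple modules are isomorphic, so a module that is
finite-dimensional over `k` is determined up to isomorphism by its `k`-dimension. The `k`-dual
`M*` of the right `A`-module `M` is a left `A`-module with `dim M* = dim M`, hence isomorphic to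
`M`; such an isomorphism conjugates `λ_a` into the transpose of `ρ_a`, and transposition
preserves determinants.
-/

open Module

theorem IsSimpleRing.isIsotypicOfType (R : Type*) [Ring R] [IsSimpleRing R] [IsArtinianRing R]
    (M S : Type*) [AddCommGroup M] [Module R M] [AddCommGroup S] [Module R S]
    [IsSimpleModule R S] : IsIsotypicOfType R M S := fun m _ ↦
  have ⟨_, ⟨e⟩⟩ := IsSemisimpleRing.exists_linearEquiv_ideal_of_isSimpleModule R m
  have ⟨_, ⟨e'⟩⟩ := IsSemisimpleRing.exists_linearEquiv_ideal_of_isSimpleModule R S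
  have := IsSimpleModule.congr e.symm
  have := IsSimpleModule.congr e'.symm
  ⟨e.trans <| (isIsotypic R R _ _).some.trans e'.symm⟩

section FiniteDimensional

variable (k A : Type*) [Field k] [Ring A] [Algebra k A] [IsSimpleRing A] [FiniteDimensional k A]

theorem IsSimpleRing.nonempty_linearEquiv_fun_finrank_div (S M : Type*)
    [AddCommGroup S] [Module k S] [Module A S] [IsScalarTower k A S] [IsSimpleModule A S]
    [FiniteDimensional k S]
    [AddCommGroup M] [Module k M] [Module A M] [IsScalarTower k A M] [FiniteDimensional k M] :
    Nonempty (M ≃ₗ[A] Fin (finrank k M / finrank k S) → S) := by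
  have := IsArtinianRing.of_finite k A
  have := Module.Finite.of_restrictScalars_finite k A M
  have := IsSimpleModule.nontrivial A S
  obtain ⟨n, ⟨e⟩⟩ := (isIsotypicOfType A M S).linearEquiv_fun
  have hM : finrank k M = n * finrank k S := by
    simp [(e.restrictScalars k).finrank_eq, Module.finrank_pi_fintype]
  rw [hM, Nat.mul_div_cancel _ finrank_pos]
  exact ⟨e⟩

theorem IsSimpleRing.nonempty_linearEquiv_of_finrank_eq {M N : Type*}
    [AddCommGroup M] [Module k M] [Module A M] [IsScalarTower k A M] [FiniteDimensional k M]
    [AddCommGroup N] [Module k N] [Module A N] [IsScalarTower k A N] [FiniteDimensional k N]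
    (h : finrank k M = finrank k N) : Nonempty (M ≃ₗ[A] N) := by
  have := IsArtinianRing.of_finite k A
  obtain ⟨I, hI⟩ := IsAtomic.exists_atom (Submodule A A)
  have := isSimpleModule_iff_isAtom.mpr hI
  obtain ⟨eM⟩ := nonempty_linearEquiv_fun_finrank_div k A I M
  obtain ⟨eN⟩ := nonempty_linearEquiv_fun_finrank_div k A I N
  exact ⟨eM.trans (h ▸ eN.symm)⟩

theorem IsSimpleRing.det_toLinearMap_eq_of_finrank_eq {M N : Type*}
    [AddCommGroup M] [Module k M] [Module A M] [IsScalarTower k A M] [FiniteDimensional k M]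
    [AddCommGroup N] [Module k N] [Module A N] [IsScalarTower k A N] [FiniteDimensional k N]
    (h : finrank k M = finrank k N) (a : A) :
    LinearMap.det (DistribSMul.toLinearMap k M a) =
      LinearMap.det (DistribSMul.toLinearMap k N a) := by
  obtain ⟨e⟩ := nonempty_linearEquiv_of_finrank_eq k A h
  rw [← LinearMap.det_conj _ (e.restrictScalars k)]
  congr 1
  ext n
  simp

end FiniteDimensional

namespace Module.Dual

variable (k A M : Type*) [Field k] [Ring A] [Algebra k A] [AddCommGroup M] [Module k M]
  [Module Aᵐᵒᵖ M] [IsScalarTower k Aᵐᵒᵖ M]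

/-- `Aᵐᵒᵖᵈᵐᵃ` acts on `Dual k M` by precomposition, and `RingEquiv.opOp` identifies it with `A`. -/
abbrev moduleOfMulOpposite : Module A (Dual k M) :=
  Module.compHom (Dual k M) (R := Aᵐᵒᵖᵈᵐᵃ) (RingEquiv.opOp A).toRingHom

attribute [local instance] moduleOfMulOpposite

variable {k A M} in
theorem moduleOfMulOpposite_smul_apply (a : A) (φ : Dual k M) (m : M) :
    (a • φ) m = φ (MulOpposite.op a • m) :=
  rfl

theorem isScalarTower_moduleOfMulOpposite : IsScalarTower k A (Dual k M) :=
  ⟨fun c a φ ↦ by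
    ext m
    rw [LinearMap.smul_apply, moduleOfMulOpposite_smul_apply, moduleOfMulOpposite_smul_apply,
      MulOpposite.op_smul, smul_assoc, map_smul]⟩

attribute [local instance] isScalarTower_moduleOfMulOpposite

theorem toLinearMap_moduleOfMulOpposite (a : A) :
    DistribSMul.toLinearMap k (Dual k M) a =
      (DistribSMul.toLinearMap k M (MulOpposite.op a)).dualMap :=
  rfl

end Module.Dual

theorem det_leftMul_eq_det_rightMul_general
    (k A M : Type) [Field k] [Ring A] [Algebra k A]
    [IsSimpleRing A] [FiniteDimensional k A]
    [AddCommGroup M] [Module k M] [Module A M] [Module Aᵐᵒᵖ M]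
    [IsScalarTower k A M] [IsScalarTower k Aᵐᵒᵖ M]
    [FiniteDimensional k M] (a : A) :
    LinearMap.det (DistribMulAction.toLinearMap k M a) =
      LinearMap.det (DistribMulAction.toLinearMap k M (MulOpposite.op a)) := by
  let := Module.Dual.moduleOfMulOpposite k A M
  have := Module.Dual.isScalarTower_moduleOfMulOpposite k A M
  calc LinearMap.det (DistribSMul.toLinearMap k M a)
      = LinearMap.det (DistribSMul.toLinearMap k (Dual k M) a) :=
        IsSimpleRing.det_toLinearMap_eq_of_finrank_eq k A Subspace.dual_finrank_eq.symm a
    _ = LinearMap.det (DistribSMul.toLinearMap k M (MulOpposite.op a)).dualMap := by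
        rw [Module.Dual.toLinearMap_moduleOfMulOpposite]
    _ = LinearMap.det (DistribSMul.toLinearMap k M (MulOpposite.op a)) :=
        LinearMap.det_dualMap _

/-- **Lemma 4.2.** Let `k` be a field, `A` a finite-dimensional simple `k`-algebra and `M`
an `A`-bimodule (with both induced `k`-actions agreeing with the given one), which is
finite-dimensional as a `k`-vector space.  Then for every `a : A`, left multiplication by `a`
and right multiplication by `a` (as `k`-linear endomorphisms of `M`) have the same
determinant over `k`. -/
theorem det_leftMul_eq_det_rightMul
    (k A M : Type) [Field k] [Ring A] [Algebra k A]
    [IsSimpleRing A] [FiniteDimensional k A]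
    [AddCommGroup M] [Module k M] [Module A M] [Module Aᵐᵒᵖ M]
    [IsScalarTower k A M] [IsScalarTower k Aᵐᵒᵖ M]
    [SMulCommClass A Aᵐᵒᵖ M]
    [SMulCommClass A k M] [SMulCommClass Aᵐᵒᵖ k M]
    [FiniteDimensional k M] (a : A) :
    LinearMap.det (DistribMulAction.toLinearMap k M a) =
      LinearMap.det (DistribMulAction.toLinearMap k M (MulOpposite.op a)) :=
  det_leftMul_eq_det_rightMul_general k A M a
end

section
/- Let C be an ℝ-linear category, let F : C → C be an ℝ-linear functor, and let ω be an object of C such that the endomorphism algebra E = End(ω) is a finite-dimensional simple ℝ-algebra and the ℝ-vector space G = Hom(F(ω), ω) is finite-dimensional. Then for every automorphism α of ω, the ℝ-linear endomorphisms of G given by φ ↦ α ∘ φ and φ ↦ φ ∘ F(α) have the same determinant over ℝ. -/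
/-!
Postcomposition makes `G = (F.obj ω ⟶ ω)` a left `E`-module, so transposition makes its dual `G*`
a right `E`-module; precomposition with `F.map` makes `G` itself a right `E`-module. A
finite-dimensional module over a simple algebra is a power of the unique simple module, hence is
determined up to isomorphism by its dimension. So `G*` and `G` are isomorphic right `E`-modules,
`α` acts on them with the same determinant, and transposition does not change determinants.
-/

open CategoryTheory Module

namespace IsSimpleRing

theorem isIsotypicOfType_ideal {R : Type*} [Ring R] [IsSimpleRing R] [IsArtinianRing R]
    (I : Ideal R) [IsSimpleModule R I] (M : Type*) [AddCommGroup M] [Module R M] :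
    IsIsotypicOfType R M I := fun m _ =>
  have ⟨J, ⟨e⟩⟩ := IsSemisimpleRing.exists_linearEquiv_ideal_of_isSimpleModule R m
  have := IsSimpleModule.congr e.symm
  ⟨e.trans (isIsotypic R R I J).some⟩

variable {K A : Type*} [Field K] [Ring A] [Algebra K A] [IsSimpleRing A] [FiniteDimensional K A]

theorem exists_finrank_eq_mul_and_linearEquiv_fin_fun (I : Ideal A) [IsSimpleModule A I]
    (M : Type*) [AddCommGroup M] [Module A M] [Module K M] [IsScalarTower K A M]
    [FiniteDimensional K M] :
    ∃ n, finrank K M = n * finrank K I ∧ Nonempty (M ≃ₗ[A] Fin n → I) := by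
  have : IsArtinianRing A := .of_finite K A
  have : Module.Finite A M := .of_restrictScalars_finite K A M
  obtain ⟨n, ⟨e⟩⟩ := (isIsotypicOfType_ideal I M).linearEquiv_fun
  refine ⟨n, ?_, ⟨e⟩⟩
  rw [(e.restrictScalars K).finrank_eq, finrank_pi_fintype, Finset.sum_const, Finset.card_univ,
    Fintype.card_fin, smul_eq_mul]

theorem nonempty_linearEquiv_of_finrank_eq_s3 {M N : Type*} [AddCommGroup M] [AddCommGroup N]
    [Module A M] [Module A N] [Module K M] [Module K N] [IsScalarTower K A M]
    [IsScalarTower K A N] [FiniteDimensional K M] [FiniteDimensional K N]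
    (h : finrank K M = finrank K N) : Nonempty (M ≃ₗ[A] N) := by
  have : IsArtinianRing A := .of_finite K A
  obtain ⟨I, hI⟩ := IsAtomic.exists_atom (Ideal A)
  have : IsSimpleModule A I := isSimpleModule_iff_isAtom.2 hI
  have : Nontrivial I := IsSimpleModule.nontrivial A I
  obtain ⟨m, hm, ⟨eM⟩⟩ := exists_finrank_eq_mul_and_linearEquiv_fin_fun (K := K) I M
  obtain ⟨n, hn, ⟨eN⟩⟩ := exists_finrank_eq_mul_and_linearEquiv_fin_fun (K := K) I N
  obtain rfl : m = n := Nat.eq_of_mul_eq_mul_right finrank_pos (hm.symm.trans (h.trans hn))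
  exact ⟨eM.trans eN.symm⟩

end IsSimpleRing

theorem AlgHom.isScalarTower_compHom {K A V : Type*} [CommSemiring K] [Semiring A] [Algebra K A]
    [AddCommMonoid V] [Module K V] (ρ : A →ₐ[K] Module.End K V) :
    letI := Module.compHom V ρ.toRingHom
    IsScalarTower K A V :=
  letI := Module.compHom V ρ.toRingHom
  ⟨fun r a v => show ρ (r • a) v = r • ρ a v by rw [map_smul]; rfl⟩

theorem IsSimpleRing.det_algHom_apply_eq_of_finrank_eq {K A V W : Type*} [Field K] [Ring A]
    [Algebra K A] [IsSimpleRing A] [FiniteDimensional K A] [AddCommGroup V] [Module K V]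
    [FiniteDimensional K V] [AddCommGroup W] [Module K W] [FiniteDimensional K W]
    (h : finrank K V = finrank K W) (ρ : A →ₐ[K] Module.End K V) (σ : A →ₐ[K] Module.End K W)
    (a : A) : (ρ a).det = (σ a).det := by
  let := Module.compHom V ρ.toRingHom
  let := Module.compHom W σ.toRingHom
  have := ρ.isScalarTower_compHom
  have := σ.isScalarTower_compHom
  obtain ⟨e⟩ := nonempty_linearEquiv_of_finrank_eq_s3 (A := A) h
  let e' := e.restrictScalars K
  have : σ a = e' ∘ₗ ρ a ∘ₗ e'.symm := by
    ext w
    exact congrArg (a • ·) (e.apply_symm_apply w).symm |>.trans (e.map_smul a _).symm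
  rw [this, LinearMap.det_conj]

def Module.End.dualMapAlgHom (R M : Type*) [CommSemiring R] [AddCommMonoid M] [Module R M] :
    (Module.End R M)ᵐᵒᵖ →ₐ[R] Module.End R (Dual R M) where
  toFun f := f.unop.dualMap
  map_one' := LinearMap.dualMap_id
  map_mul' f g := (LinearMap.dualMap_comp_dualMap f.unop g.unop).symm
  map_zero' := by ext; simp
  map_add' _ _ := by ext; simp
  commutes' r := by ext; simp [Algebra.algebraMap_eq_smul_one]

namespace CategoryTheory

variable (R : Type*) [CommSemiring R] {C : Type*} [Category C] [Preadditive C]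
  [CategoryTheory.Linear R C]

def Linear.rightCompAlgHom (X Y : C) : End Y →ₐ[R] Module.End R (X ⟶ Y) where
  toFun := Linear.rightComp R X
  map_one' := by ext; simp [End.one_def]
  map_mul' _ _ := by ext; simp [End.mul_def]
  map_zero' := by ext; simp
  map_add' _ _ := by ext; exact Preadditive.comp_add ..
  commutes' r := by ext; exact (Linear.comp_smul ..).trans (by simp)

def Linear.leftCompAlgHom (X Y : C) : (End X)ᵐᵒᵖ →ₐ[R] Module.End R (X ⟶ Y) where
  toFun f := Linear.leftComp R Y f.unop
  map_one' := by ext; simp [End.one_def]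
  map_mul' _ _ := by ext; simp [End.mul_def]
  map_zero' := by ext; simp
  map_add' _ _ := by ext; exact Preadditive.add_comp ..
  commutes' r := by ext; exact (Linear.smul_comp ..).trans (by simp)

def Functor.mapEndAlgHom {D : Type*} [Category D] [Preadditive D] [CategoryTheory.Linear R D]
    (F : C ⥤ D) [F.Additive] [F.Linear R] (X : C) : End X →ₐ[R] End (F.obj X) where
  __ := F.mapEnd X
  map_zero' := F.map_zero X X
  map_add' _ _ := F.map_add
  commutes' r := (F.map_smul r (𝟙 X)).trans (congrArg (r • ·) (F.map_id X))

end CategoryTheory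

/-- Let `C` be an `ℝ`-linear category, `F : C ⥤ C` an `ℝ`-linear functor and `ω` an object of `C`
such that `E = End ω` is a finite-dimensional simple `ℝ`-algebra and the `ℝ`-vector space
`G = (F.obj ω ⟶ ω)` is finite-dimensional.  Then for every automorphism `α` of `ω`, the
`ℝ`-linear endomorphisms of `G` given by postcomposition with `α` (`φ ↦ α ∘ φ`) and
precomposition with `F.map α` (`φ ↦ φ ∘ F.map α`) have the same determinant over `ℝ`. -/
theorem det_postcomp_eq_det_precomp
    (C : Type) [Category C] [Preadditive C] [Linear ℝ C]
    (F : C ⥤ C) [F.Additive] [F.Linear ℝ] (ω : C)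
    [IsSimpleRing (End ω)] [FiniteDimensional ℝ (End ω)]
    [FiniteDimensional ℝ (F.obj ω ⟶ ω)]
    (α : ω ≅ ω) :
    LinearMap.det (Linear.rightComp ℝ (F.obj ω) α.hom) =
      LinearMap.det (Linear.leftComp ℝ ω (F.map α.hom)) := by
  let precomp := (Linear.leftCompAlgHom ℝ (F.obj ω) ω).comp (AlgHom.op (F.mapEndAlgHom ℝ ω))
  let postcompDual := (Module.End.dualMapAlgHom ℝ (F.obj ω ⟶ ω)).comp
    (AlgHom.op (Linear.rightCompAlgHom ℝ (F.obj ω) ω))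
  have h := IsSimpleRing.det_algHom_apply_eq_of_finrank_eq Subspace.dual_finrank_eq
    postcompDual precomp (.op α.hom)
  have hpostcompDual :
      postcompDual (.op α.hom) = (Linear.rightComp ℝ (F.obj ω) α.hom).dualMap := by
    ext; rfl
  rwa [hpostcompDual, LinearMap.det_dualMap] at h
end
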